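/- arXiv:2112.05815 — 2 statements merged into one kernel-verified Lean document; each statement's English description precedes it below -/
import Mathlib

section
/- Let X_j be a random vector in ℝ^k with zero mean and identity covariance matrix, let θ_j ∈ ℝ, and let Y_j = X_j·1{‖θ_j X_j‖ ≤ 1}. Then for every t ∈ ℝ^k, |E exp(i·θ_j⟨t, Y_j⟩)| ≤ |g_j(θ_j t)| + 2k·θ_j², where g_j(t) = E exp(i⟨t, X_j⟩) is the characteristic function of X_j. -/
open MeasureTheory ProbabilityTheory Real
open scoped RealInnerProductSpace BigOperators

/-- Truncation `Y = X·1{‖c X‖ ≤ 1}`. -/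
noncomputable def truncV {Ω : Type*} {k : ℕ} (X : Ω → EuclideanSpace ℝ (Fin k)) (c : ℝ) :
    Ω → EuclideanSpace ℝ (Fin k) :=
  fun ω => if ‖c • X ω‖ ≤ 1 then X ω else 0

/-- Characteristic function `t ↦ E exp(i⟨t, W⟩)` of a random vector `W`. -/
noncomputable def charFn {Ω : Type*} [MeasurableSpace Ω] (μ : Measure Ω) {k : ℕ}
    (W : Ω → EuclideanSpace ℝ (Fin k)) (t : EuclideanSpace ℝ (Fin k)) : ℂ :=
  ∫ ω, Complex.exp ((⟪t, W ω⟫ : ℂ) * Complex.I) ∂μ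

/-!
Truncation changes `X` only on the event `{‖θ X‖ > 1}`, and there the two integrands
`exp(i⟨θt, ·⟩)` differ by at most `2`; so the characteristic functions differ by at most twice
the probability of that event, which Chebyshev's inequality bounds by `θ² E‖X‖² = kθ²`.
-/

section CharFn

variable {Ω : Type*} [MeasurableSpace Ω] {μ : Measure Ω} {k : ℕ}

lemma integrable_exp_inner_mul_I [IsFiniteMeasure μ] {W : Ω → EuclideanSpace ℝ (Fin k)}
    (hW : Measurable W) (t : EuclideanSpace ℝ (Fin k)) :
    Integrable (fun ω => Complex.exp ((⟪t, W ω⟫ : ℂ) * Complex.I)) μ := by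
  refine (integrable_const (1 : ℝ)).mono' (by fun_prop) (Filter.Eventually.of_forall fun ω => ?_)
  rw [Complex.norm_exp_ofReal_mul_I]

lemma norm_charFn_sub_le_of_eqOn_compl [IsFiniteMeasure μ] {W W' : Ω → EuclideanSpace ℝ (Fin k)}
    (hW : Measurable W) (hW' : Measurable W') {A : Set Ω} (hA : MeasurableSet A)
    (heq : Set.EqOn W W' Aᶜ) (t : EuclideanSpace ℝ (Fin k)) :
    ‖charFn μ W t - charFn μ W' t‖ ≤ 2 * μ.real A := by
  rw [charFn, charFn, ← integral_sub (integrable_exp_inner_mul_I hW t)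
    (integrable_exp_inner_mul_I hW' t)]
  calc _ ≤ ∫ ω, A.indicator (fun _ => (2 : ℝ)) ω ∂μ := by
        refine norm_integral_le_of_norm_le ((integrable_const _).indicator hA)
          (Filter.Eventually.of_forall fun ω => ?_)
        by_cases hω : ω ∈ A
        · rw [Set.indicator_of_mem hω]
          refine (norm_sub_le _ _).trans_eq ?_
          rw [Complex.norm_exp_ofReal_mul_I, Complex.norm_exp_ofReal_mul_I]
          norm_num
        · simp [Set.indicator_of_notMem hω, heq hω]
    _ = 2 * μ.real A := by rw [integral_indicator_const _ hA, smul_eq_mul, mul_comm]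

end CharFn

section SecondMoment

variable {Ω : Type*} [MeasurableSpace Ω] {μ : Measure Ω}

lemma measureReal_one_lt_norm_smul_le [IsFiniteMeasure μ] {E : Type*} [NormedAddCommGroup E]
    [NormedSpace ℝ E] {X : Ω → E} (hX : Integrable (fun ω => ‖X ω‖ ^ 2) μ) (c : ℝ) :
    μ.real {ω | ¬ ‖c • X ω‖ ≤ 1} ≤ c ^ 2 * ∫ ω, ‖X ω‖ ^ 2 ∂μ := by
  have hsub : {ω | ¬ ‖c • X ω‖ ≤ 1} ⊆ {ω | 1 ≤ c ^ 2 * ‖X ω‖ ^ 2} := by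
    intro ω (hω : ¬ ‖c • X ω‖ ≤ 1)
    have h : 1 ≤ ‖c • X ω‖ ^ 2 := one_le_pow₀ (not_le.mp hω).le
    rwa [norm_smul, mul_pow, Real.norm_eq_abs, sq_abs] at h
  have hcheb := mul_meas_ge_le_integral_of_nonneg
    (Filter.Eventually.of_forall fun ω => by positivity) (hX.const_mul (c ^ 2)) 1
  rw [one_mul, integral_const_mul] at hcheb
  exact (measureReal_mono hsub (measure_ne_top μ _)).trans hcheb

variable {ι : Type*} [Fintype ι] {X : Ω → EuclideanSpace ℝ ι}

lemma integrable_norm_sq_of_integrable_sq_apply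
    (hX : ∀ i, Integrable (fun ω => X ω i ^ 2) μ) :
    Integrable (fun ω => ‖X ω‖ ^ 2) μ := by
  simpa only [EuclideanSpace.real_norm_sq_eq] using integrable_finsetSum _ fun i _ => hX i

lemma integral_norm_sq_eq_sum (hX : ∀ i, Integrable (fun ω => X ω i ^ 2) μ) :
    ∫ ω, ‖X ω‖ ^ 2 ∂μ = ∑ i, ∫ ω, X ω i ^ 2 ∂μ := by
  simp only [EuclideanSpace.real_norm_sq_eq]
  exact integral_finsetSum _ fun i _ => hX i

end SecondMoment

lemma measurable_truncV {Ω : Type*} [MeasurableSpace Ω] {k : ℕ}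
    {X : Ω → EuclideanSpace ℝ (Fin k)} (hX : Measurable X) (c : ℝ) :
    Measurable (truncV X c) :=
  Measurable.ite (measurableSet_le (by fun_prop) measurable_const) hX measurable_const

theorem charFn_trunc_bound_general
    {Ω : Type*} [MeasurableSpace Ω] {μ : Measure Ω} [IsProbabilityMeasure μ]
    {k : ℕ} (X : Ω → EuclideanSpace ℝ (Fin k))
    (hmeas : Measurable X)
    (hcov : ∀ i l : Fin k, ∫ ω, X ω i * X ω l ∂μ = if i = l then 1 else 0)
    (θ : ℝ) :
    ∀ t : EuclideanSpace ℝ (Fin k),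
      ‖charFn μ (truncV X θ) (θ • t)‖ ≤
        ‖charFn μ X (θ • t)‖ + 2 * k * θ ^ 2 := by
  intro t
  have hvar : ∀ i, ∫ ω, X ω i ^ 2 ∂μ = 1 := fun i => by simpa [sq] using hcov i i
  have hsq : ∀ i, Integrable (fun ω => X ω i ^ 2) μ :=
    fun i => .of_integral_ne_zero (by simp [hvar])
  have hmoment : ∫ ω, ‖X ω‖ ^ 2 ∂μ = k := by simp [integral_norm_sq_eq_sum hsq, hvar]
  have hbad : MeasurableSet {ω | ¬ ‖θ • X ω‖ ≤ 1} :=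
    (measurableSet_le (hmeas.const_smul θ).norm measurable_const).compl
  have htrunc : Set.EqOn (truncV X θ) X {ω | ¬ ‖θ • X ω‖ ≤ 1}ᶜ :=
    fun ω hω => if_pos (not_not.mp hω)
  calc ‖charFn μ (truncV X θ) (θ • t)‖
      ≤ ‖charFn μ X (θ • t)‖ + ‖charFn μ (truncV X θ) (θ • t) - charFn μ X (θ • t)‖ :=
        norm_le_norm_add_norm_sub' _ _
    _ ≤ ‖charFn μ X (θ • t)‖ + 2 * μ.real {ω | ¬ ‖θ • X ω‖ ≤ 1} := by
        gcongr
        exact norm_charFn_sub_le_of_eqOn_compl (measurable_truncV hmeas θ) hmeas hbad htrunc _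
    _ ≤ ‖charFn μ X (θ • t)‖ + 2 * (θ ^ 2 * k) := by
        gcongr
        rw [← hmoment]
        exact measureReal_one_lt_norm_smul_le (integrable_norm_sq_of_integrable_sq_apply hsq) θ
    _ = ‖charFn μ X (θ • t)‖ + 2 * k * θ ^ 2 := by ring

/-- the characteristic function of the truncated vector is close to
that of the original vector: `|E exp(iθ⟨t,Y⟩)| ≤ |g(θt)| + 2kθ²`. -/
theorem charFn_trunc_bound
    {Ω : Type*} [MeasurableSpace Ω] {μ : Measure Ω} [IsProbabilityMeasure μ]
    {k : ℕ} (X : Ω → EuclideanSpace ℝ (Fin k))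
    (hmeas : Measurable X)
    (hmean : ∫ ω, X ω ∂μ = 0)
    (hcov : ∀ i l : Fin k, ∫ ω, X ω i * X ω l ∂μ = if i = l then 1 else 0)
    (θ : ℝ) :
    ∀ t : EuclideanSpace ℝ (Fin k),
      ‖charFn μ (truncV X θ) (θ • t)‖ ≤
        ‖charFn μ X (θ • t)‖ + 2 * k * θ ^ 2 :=
  charFn_trunc_bound_general X hmeas hcov θ
end

section
/- Let X_j be a random vector in ℝ^k with identity covariance matrix, zero mean, and δ_j^4 = E‖X_j‖^4 < ∞, let θ_j ∈ ℝ, Y_j = X_j·1{‖θ_j X_j‖ ≤ 1}, Z_j = Y_j − E Y_j. Then for every multi-index ν with |ν| = 3, the mixed moment μ_ν(Z_j) = E Z_j^ν satisfies (μ_ν(Z_j))² ≤ 2^6·δ_j^4. -/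
/-! Two Cauchy–Schwarz steps give the Hölder bound
`(E[Z_a Z_b Z_c])⁴ ≤ (E Z_a²)² · E Z_b⁴ · E Z_c⁴`. Truncation shrinks every coordinate and centering
does not increase second moments, so `E Z_a² ≤ E X_a² = 1`; and `(x - y)⁴ ≤ 8x⁴ + 8y⁴` together with
`(E Y_b)⁴ ≤ E Y_b⁴` gives `E Z_b⁴ ≤ 16 E Y_b⁴ ≤ 16 δ⁴`. Hence `(E Z^ν)² ≤ 16 δ⁴`. -/

open MeasureTheory ProbabilityTheory Real
open scoped BigOperators

/-- Centering `Z = Y − E Y`. -/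
noncomputable def ctrV {Ω : Type*} [MeasurableSpace Ω] (μ : Measure Ω) {k : ℕ}
    (Y : Ω → EuclideanSpace ℝ (Fin k)) : Ω → EuclideanSpace ℝ (Fin k) :=
  fun ω => Y ω - ∫ ω', Y ω' ∂μ

theorem exists_prod_pow_eq_mul_mul_of_sum_eq_three {ι M : Type*} [Fintype ι] [CommMonoid M]
    (ν : ι → ℕ) (hν : ∑ i, ν i = 3) :
    ∃ a b c : ι, ∀ z : ι → M, ∏ i, z i ^ ν i = z a * z b * z c := by
  classical
  set m : Multiset ι := Finset.univ.val.bind fun i => Multiset.replicate (ν i) i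
  have hcard : Multiset.card m = 3 := by
    rw [Multiset.card_bind, ← hν, Finset.sum_eq_multiset_sum]
    simp
  obtain ⟨a, b, c, habc⟩ := Multiset.card_eq_three.mp hcard
  refine ⟨a, b, c, fun z => ?_⟩
  have hprod : ∏ i, z i ^ ν i = (m.map z).prod := by
    rw [Multiset.map_bind, Multiset.prod_bind, Finset.prod_eq_multiset_prod]
    simp
  simp [hprod, habc, mul_assoc]

section Moments

variable {Ω : Type*} [MeasurableSpace Ω] {μ : Measure Ω} {f g h : Ω → ℝ}

theorem MeasureTheory.MemLp.sq (hf : MemLp f 4 μ) : MemLp (fun ω => f ω ^ 2) 2 μ := by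
  refine (memLp_two_iff_integrable_sq (hf.1.pow 2)).2 ?_
  have := hf.integrable_norm_pow (p := 4) four_ne_zero
  simpa [Real.norm_eq_abs, ← pow_mul, Even.pow_abs ⟨2, rfl⟩] using this

theorem MeasureTheory.MemLp.integrable_pow_four (hf : MemLp f 4 μ) :
    Integrable (fun ω => f ω ^ 4) μ := by
  simpa only [← pow_mul] using hf.sq.integrable_sq

theorem sq_integral_mul_le_integral_sq_mul (hf : MemLp f 2 μ) (hg : MemLp g 2 μ) :
    (∫ ω, f ω * g ω ∂μ) ^ 2 ≤ (∫ ω, f ω ^ 2 ∂μ) * ∫ ω, g ω ^ 2 ∂μ := by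
  have hf2 := hf.integrable_sq
  have hg2 := hg.integrable_sq
  have hfg : Integrable (fun ω => f ω * g ω) μ := hf.integrable_mul hg
  have hquad : ∀ t : ℝ, 0 ≤ (∫ ω, f ω ^ 2 ∂μ) * (t * t) + 2 * (∫ ω, f ω * g ω ∂μ) * t
      + ∫ ω, g ω ^ 2 ∂μ := by
    intro t
    have hexp : ∫ ω, (t * f ω + g ω) ^ 2 ∂μ = t * t * (∫ ω, f ω ^ 2 ∂μ)
        + 2 * t * (∫ ω, f ω * g ω ∂μ) + ∫ ω, g ω ^ 2 ∂μ := by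
      simp_rw [show ∀ ω, (t * f ω + g ω) ^ 2 = t * t * f ω ^ 2 + 2 * t * (f ω * g ω) + g ω ^ 2
        from fun ω => by ring]
      rw [integral_add ((hf2.const_mul _).fun_add (hfg.const_mul _)) hg2,
        integral_add (hf2.const_mul _) (hfg.const_mul _), integral_const_mul, integral_const_mul]
    have hnonneg : 0 ≤ ∫ ω, (t * f ω + g ω) ^ 2 ∂μ := integral_nonneg fun ω => sq_nonneg _
    rw [hexp] at hnonneg
    linear_combination hnonneg
  have := discrim_le_zero hquad
  rw [discrim] at this
  nlinarith

theorem pow_four_integral_mul_mul_le (hf : MemLp f 2 μ) (hg : MemLp g 4 μ) (hh : MemLp h 4 μ) :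
    (∫ ω, f ω * g ω * h ω ∂μ) ^ 4
      ≤ (∫ ω, f ω ^ 2 ∂μ) ^ 2 * ((∫ ω, g ω ^ 4 ∂μ) * ∫ ω, h ω ^ 4 ∂μ) := by
  have hgh : MemLp (fun ω => g ω * h ω) 2 μ :=
    (memLp_two_iff_integrable_sq (hg.1.mul hh.1)).2 <| by
      simp only [Pi.mul_apply, mul_pow]
      exact hg.sq.integrable_mul hh.sq
  have hfgh := sq_integral_mul_le_integral_sq_mul hf hgh
  have hgh2 := sq_integral_mul_le_integral_sq_mul hg.sq hh.sq
  simp only [← pow_mul, ← mul_pow] at hgh2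
  calc (∫ ω, f ω * g ω * h ω ∂μ) ^ 4 = ((∫ ω, f ω * (g ω * h ω) ∂μ) ^ 2) ^ 2 := by
        simp only [mul_assoc]; ring
    _ ≤ ((∫ ω, f ω ^ 2 ∂μ) * ∫ ω, (g ω * h ω) ^ 2 ∂μ) ^ 2 := by gcongr
    _ ≤ (∫ ω, f ω ^ 2 ∂μ) ^ 2 * ((∫ ω, g ω ^ 4 ∂μ) * ∫ ω, h ω ^ 4 ∂μ) := by
        rw [mul_pow]; gcongr

variable [IsProbabilityMeasure μ]

theorem sq_integral_le_integral_sq (hf : MemLp f 2 μ) :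
    (∫ ω, f ω ∂μ) ^ 2 ≤ ∫ ω, f ω ^ 2 ∂μ := by
  have := variance_nonneg f μ
  rw [variance_eq_sub hf] at this
  simpa using this

theorem pow_four_integral_le_integral_pow_four (hf : MemLp f 4 μ) :
    (∫ ω, f ω ∂μ) ^ 4 ≤ ∫ ω, f ω ^ 4 ∂μ :=
  calc (∫ ω, f ω ∂μ) ^ 4 = ((∫ ω, f ω ∂μ) ^ 2) ^ 2 := by ring
    _ ≤ (∫ ω, f ω ^ 2 ∂μ) ^ 2 := by
      gcongr
      exact sq_integral_le_integral_sq (hf.mono_exponent (by norm_num))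
    _ ≤ ∫ ω, (f ω ^ 2) ^ 2 ∂μ := sq_integral_le_integral_sq hf.sq
    _ = ∫ ω, f ω ^ 4 ∂μ := by simp only [← pow_mul]

theorem integral_sub_integral_sq_le (hf : MemLp f 2 μ) :
    ∫ ω, (f ω - ∫ ω', f ω' ∂μ) ^ 2 ∂μ ≤ ∫ ω, f ω ^ 2 ∂μ := by
  have := variance_le_expectation_sq hf.1
  rwa [variance_eq_integral hf.1.aemeasurable] at this

theorem integral_sub_integral_pow_four_le (hf : MemLp f 4 μ) :
    ∫ ω, (f ω - ∫ ω', f ω' ∂μ) ^ 4 ∂μ ≤ 16 * ∫ ω, f ω ^ 4 ∂μ := by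
  set m := ∫ ω', f ω' ∂μ
  have hf4 := hf.integrable_pow_four
  calc ∫ ω, (f ω - m) ^ 4 ∂μ ≤ ∫ ω, (8 * f ω ^ 4 + 8 * m ^ 4) ∂μ := by
        refine integral_mono_of_nonneg (ae_of_all _ fun ω => by positivity)
          ((hf4.const_mul 8).add (integrable_const _)) (ae_of_all _ fun ω => ?_)
        nlinarith [sq_nonneg (f ω + m), sq_nonneg (f ω - m), sq_nonneg (f ω ^ 2 - m ^ 2)]
    _ = 8 * ∫ ω, f ω ^ 4 ∂μ + 8 * m ^ 4 := by
        rw [integral_add (hf4.const_mul 8) (integrable_const _), integral_const_mul]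
        simp
    _ ≤ 16 * ∫ ω, f ω ^ 4 ∂μ := by
        linarith [pow_four_integral_le_integral_pow_four hf]

end Moments

section Truncation

variable {Ω : Type*} {k : ℕ} {X Y : Ω → EuclideanSpace ℝ (Fin k)} {c : ℝ}

theorem abs_truncV_apply_le (ω : Ω) (i : Fin k) : |truncV X c ω i| ≤ |X ω i| := by
  unfold truncV
  split_ifs <;> simp

theorem norm_truncV_le (ω : Ω) : ‖truncV X c ω‖ ≤ ‖X ω‖ := by
  unfold truncV
  split_ifs <;> simp

variable [MeasurableSpace Ω] {μ : Measure Ω} {p : ENNReal}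

theorem measurable_truncV_s14 (hX : Measurable X) : Measurable (truncV X c) :=
  Measurable.ite (measurableSet_le (hX.const_smul c).norm measurable_const) hX measurable_const

theorem memLp_truncV (hX : Measurable X) (h : MemLp X p μ) : MemLp (truncV X c) p μ :=
  h.of_le (measurable_truncV_s14 hX).aestronglyMeasurable (ae_of_all _ norm_truncV_le)

theorem memLp_ctrV [IsFiniteMeasure μ] (hY : MemLp Y p μ) : MemLp (ctrV μ Y) p μ :=
  hY.sub (memLp_const _)

theorem ctrV_apply (hY : Integrable Y μ) (ω : Ω) (i : Fin k) :
    ctrV μ Y ω i = Y ω i - ∫ ω', Y ω' i ∂μ := by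
  rw [ctrV, PiLp.sub_apply, eval_integral_piLp hY.eval_piLp]

variable [IsProbabilityMeasure μ]

theorem integral_ctrV_truncV_apply_sq_le (hX : Measurable X) (h2 : MemLp X 2 μ) (i : Fin k) :
    ∫ ω, ctrV μ (truncV X c) ω i ^ 2 ∂μ ≤ ∫ ω, X ω i ^ 2 ∂μ := by
  have hY := memLp_truncV (c := c) hX h2
  simp_rw [ctrV_apply (hY.integrable one_le_two)]
  exact (integral_sub_integral_sq_le (hY.eval_piLp i)).trans <|
    integral_mono (hY.eval_piLp i).integrable_sq (h2.eval_piLp i).integrable_sq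
      fun ω => sq_le_sq.2 (abs_truncV_apply_le ω i)

theorem integral_ctrV_truncV_apply_pow_four_le (hX : Measurable X) (h4 : MemLp X 4 μ)
    (i : Fin k) :
    ∫ ω, ctrV μ (truncV X c) ω i ^ 4 ∂μ ≤ 16 * ∫ ω, ‖X ω‖ ^ 4 ∂μ := by
  have hY := memLp_truncV (c := c) hX h4
  simp_rw [ctrV_apply (hY.integrable (by norm_num))]
  refine (integral_sub_integral_pow_four_le (hY.eval_piLp i)).trans ?_
  refine mul_le_mul_of_nonneg_left (integral_mono (hY.eval_piLp i).integrable_pow_four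
    (h4.integrable_norm_pow four_ne_zero) fun ω => ?_) (by norm_num)
  rw [← Even.pow_abs ⟨2, rfl⟩]
  gcongr
  exact (abs_truncV_apply_le ω i).trans (PiLp.norm_apply_le (X ω) i)

end Truncation

theorem third_mixed_moment_sq_bound_general
    {Ω : Type*} [MeasurableSpace Ω] {μ : Measure Ω} [IsProbabilityMeasure μ]
    {k : ℕ} (X : Ω → EuclideanSpace ℝ (Fin k))
    (hmeas : Measurable X)
    (hcov : ∀ i l : Fin k, ∫ ω, X ω i * X ω l ∂μ = if i = l then 1 else 0)
    (hmom : Integrable (fun ω => ‖X ω‖ ^ 4) μ)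
    (θ : ℝ) (ν : Fin k → ℕ) (hν : ∑ i, ν i = 3) :
    (∫ ω, ∏ i, (ctrV μ (truncV X θ) ω i) ^ ν i ∂μ) ^ 2 ≤
      2 ^ 6 * ∫ ω, ‖X ω‖ ^ 4 ∂μ := by
  obtain ⟨a, b, c, habc⟩ := exists_prod_pow_eq_mul_mul_of_sum_eq_three (M := ℝ) ν hν
  have hX : MemLp X 4 μ :=
    (integrable_norm_rpow_iff hmeas.aestronglyMeasurable (by norm_num) (by norm_num)).1
      (by simpa using hmom)
  have hZ (i : Fin k) : MemLp (fun ω => ctrV μ (truncV X θ) ω i) 4 μ :=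
    (memLp_ctrV (memLp_truncV hmeas hX)).eval_piLp i
  have hZ2 (i : Fin k) : ∫ ω, ctrV μ (truncV X θ) ω i ^ 2 ∂μ ≤ 1 :=
    (integral_ctrV_truncV_apply_sq_le hmeas (hX.mono_exponent (by norm_num)) i).trans_eq
      (by simpa [sq] using hcov i i)
  set D := ∫ ω, ‖X ω‖ ^ 4 ∂μ
  have hZ4 (i : Fin k) : ∫ ω, ctrV μ (truncV X θ) ω i ^ 4 ∂μ ≤ 16 * D :=
    integral_ctrV_truncV_apply_pow_four_le hmeas hX i
  set m := ∫ ω, ∏ i, (ctrV μ (truncV X θ) ω i) ^ ν i ∂μ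
  have hm : m ^ 4 ≤ (16 * D) ^ 2 := by
    simp only [m, habc]
    refine (pow_four_integral_mul_mul_le ((hZ a).mono_exponent (by norm_num)) (hZ b)
      (hZ c)).trans ?_
    calc _ ≤ (1 : ℝ) ^ 2 * ((16 * D) * (16 * D)) := by
          gcongr
          exacts [hZ2 a, hZ4 b, hZ4 c]
      _ = (16 * D) ^ 2 := by ring
  have hD : 0 ≤ D := integral_nonneg fun ω => by positivity
  nlinarith [sq_nonneg m]

/-- third mixed moments of the truncated centered vector satisfy
`(μ_ν(Z))² ≤ 2⁶ δ⁴` for every multi-index `ν` with `|ν| = 3`. -/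
theorem third_mixed_moment_sq_bound
    {Ω : Type*} [MeasurableSpace Ω] {μ : Measure Ω} [IsProbabilityMeasure μ]
    {k : ℕ} (X : Ω → EuclideanSpace ℝ (Fin k))
    (hmeas : Measurable X)
    (hmean : ∫ ω, X ω ∂μ = 0)
    (hcov : ∀ i l : Fin k, ∫ ω, X ω i * X ω l ∂μ = if i = l then 1 else 0)
    (hmom : Integrable (fun ω => ‖X ω‖ ^ 4) μ)
    (θ : ℝ) (ν : Fin k → ℕ) (hν : ∑ i, ν i = 3) :
    (∫ ω, ∏ i, (ctrV μ (truncV X θ) ω i) ^ ν i ∂μ) ^ 2 ≤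
      2 ^ 6 * ∫ ω, ‖X ω‖ ^ 4 ∂μ :=
  third_mixed_moment_sq_bound_general X hmeas hcov hmom θ ν hν
end
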